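/- Let E ⊆ X be a closed t-analytic set for A and H ⊆ X a hull-kernel closed set. Then either E \ H is empty or E \ H is dense in E. -/

import Mathlib

/-!
If some point `x ∈ E` is not in the closure of `E \ H`, then a neighbourhood `U` of `x` meets `E`
only inside `H`. Every `f ∈ A` vanishing on `H` then vanishes on the nonempty relatively open set
`U ∩ E`, hence on all of `E` by t-analyticity; so `E` lies in the hull-kernel closure of `H`,
which is `H`, and `E \ H` is empty.
-/

open Set

/-- `E` is a t-analytic set for the function algebra `A`: any `f ∈ A` vanishing on a
nonempty relatively open subset of `E` vanishes on all of `E`. -/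
def TAnalytic {X : Type*} [TopologicalSpace X] (A : Subalgebra ℂ C(X, ℂ)) (E : Set X) : Prop :=
  ∀ f ∈ A, ∀ U : Set X, IsOpen U → (U ∩ E).Nonempty →
    (∀ x ∈ U ∩ E, f x = 0) → ∀ x ∈ E, f x = 0


/-- The hull-kernel closure of a set `S`. -/
def hkClosure {X : Type*} [TopologicalSpace X] (A : Subalgebra ℂ C(X, ℂ)) (S : Set X) : Set X :=
  {y | ∀ f ∈ A, (∀ x ∈ S, f x = 0) → f y = 0}

section

variable {X : Type*} [TopologicalSpace X] {A : Subalgebra ℂ C(X, ℂ)}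

theorem hkClosure_mono {S T : Set X} (hST : S ⊆ T) : hkClosure A S ⊆ hkClosure A T :=
  fun _ hy f hf hfT => hy f hf fun x hx => hfT x (hST hx)

theorem TAnalytic.subset_hkClosure_inter {E U : Set X} (hE : TAnalytic A E) (hU : IsOpen U)
    (hUE : (U ∩ E).Nonempty) : E ⊆ hkClosure A (U ∩ E) :=
  fun y hy f hf hfUE => hE f hf U hU hUE hfUE y hy

end

theorem diff_hk_empty_or_dense_general {X : Type*} [TopologicalSpace X]
    (A : Subalgebra ℂ C(X, ℂ)) (E H : Set X) (hE : TAnalytic A E)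
    (hH : hkClosure A H = H) :
    E \ H = ∅ ∨ E ⊆ closure (E \ H) := by
  rcases (E \ H).eq_empty_or_nonempty with h | ⟨z, hzE, hzH⟩
  · exact Or.inl h
  refine Or.inr fun x hxE => by_contra fun hx => hzH ?_
  set U := (closure (E \ H))ᶜ
  have hUE : U ∩ E ⊆ H := fun y ⟨hyU, hyE⟩ => by_contra fun hyH => hyU (subset_closure ⟨hyE, hyH⟩)
  have hEH : E ⊆ H := calc
    E ⊆ hkClosure A (U ∩ E) := hE.subset_hkClosure_inter isClosed_closure.isOpen_compl ⟨x, hx, hxE⟩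
    _ ⊆ hkClosure A H := hkClosure_mono hUE
    _ = H := hH
  exact hEH hzE

theorem diff_hk_empty_or_dense {X : Type*} [TopologicalSpace X] [CompactSpace X] [T2Space X]
    (A : Subalgebra ℂ C(X, ℂ)) (E H : Set X) (hEc : IsClosed E) (hE : TAnalytic A E)
    (hH : hkClosure A H = H) :
    E \ H = ∅ ∨ E ⊆ closure (E \ H) :=
  diff_hk_empty_or_dense_general A E H hE hH
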